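/- Every continuous derivation m : L̂(V) → L̂(V) of the pro-free (completed free) Lie algebra on a finite-dimensional vector space V extends uniquely to a continuous derivation of the completed tensor algebra T̂(V) that is also a coderivation with respect to the shuffle coproduct (a Hopf algebra derivation); conversely, every continuous Hopf algebra derivation of T̂(V) restricts to a derivation of L̂(V). -/

import Mathlib

open TensorProduct

noncomputable section

variable (V : Type) [AddCommGroup V] [Module ℚ V] [FiniteDimensional ℚ V]

abbrev TA := TensorAlgebra ℚ V

attribute [local instance 100] LieRing.ofAssociativeRing

/-- x ↦ x ⊗ 1. -/
noncomputable def rUnit : TA V →ₗ[ℚ] TA V ⊗[ℚ] TA V :=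
  (TensorProduct.mk ℚ (TA V) (TA V)).flip 1

/-- x ↦ 1 ⊗ x. -/
noncomputable def lUnit : TA V →ₗ[ℚ] TA V ⊗[ℚ] TA V :=
  TensorProduct.mk ℚ (TA V) (TA V) 1

/-- The coproduct of the tensor Hopf algebra (concatenation product, the
coproduct for which elements of V are primitive — the one dual to the shuffle
product). -/
noncomputable def Δ : TensorAlgebra ℚ V →ₐ[ℚ] TA V ⊗[ℚ] TA V :=
  TensorAlgebra.lift ℚ
    ((rUnit V) ∘ₗ TensorAlgebra.ι ℚ + (lUnit V) ∘ₗ TensorAlgebra.ι ℚ)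

/-- The free Lie algebra L(V) realized inside T(V) as the Lie subalgebra of the
commutator algebra generated by V. -/
noncomputable def freeLie : LieSubalgebra ℚ (TA V) :=
  LieSubalgebra.lieSpan ℚ (TA V) (Set.range (TensorAlgebra.ι ℚ : V →ₗ[ℚ] TA V))

/-!
A derivation of `T(V)` is determined by its values on `V`, and every linear map `V → T(V)`
extends to one (through the square-zero extension `T(V) ⋉ T(V)`). Both `Δ ∘ δ` and
`(δ ⊗ 1 + 1 ⊗ δ) ∘ Δ` are derivations along `Δ`, so `δ` is a coderivation as soon as it maps `V`
to primitive elements. Since `L(V)` consists of primitives, the derivation extending `m` on `V` is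
a Hopf derivation, and it agrees with `m` on the Lie span `L(V)` of `V`.

Conversely, a Hopf derivation maps `V` to primitives, and every primitive element lies in `L(V)`:
the Dynkin map `D` takes values in `L(V)` and satisfies `μ ∘ (D ⊗ id) ∘ Δ = N` for the number
operator `N` (the derivation extending `V ↪ T(V)`), so `D x = N x` for primitive `x`. A primitive `x` has no constant term, hence lies in
a sum of eigenspaces of `N` with eigenvalues `1, …, d`; so `x` is a polynomial in `N` applied to
`N x ∈ L(V)`, and `N` preserves `L(V)`.
-/

open TensorAlgebra

namespace Module.End

open Polynomial

variable {K M : Type*} [Field K] [AddCommGroup M] [Module K M] {f : Module.End K M}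

theorem mem_of_apply_mem_of_aeval_eq_zero {L : Submodule K M} (hL : L ≤ L.comap f)
    {p : K[X]} (hp : p.coeff 0 ≠ 0) {x : M} (hpx : aeval f p x = 0) (hfx : f x ∈ L) :
    x ∈ L := by
  obtain ⟨q, hq⟩ : X ∣ p - C (p.coeff 0) := X_dvd_iff.mpr (by simp)
  have hp_eq : p = C (p.coeff 0) + q * X := by rw [mul_comm, ← hq]; ring
  rw [hp_eq, map_add, map_mul, aeval_C, aeval_X, LinearMap.add_apply, mul_apply,
    algebraMap_end_apply, add_eq_zero_iff_eq_neg] at hpx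
  have h := L.smul_mem (p.coeff 0)⁻¹ (L.neg_mem (aeval_apply_smul_mem_of_le_comap hfx q f hL))
  rwa [← hpx, smul_smul, inv_mul_cancel₀ hp, one_smul] at h

theorem exists_aeval_eq_zero_of_mem_iSup_eigenspace {ι : Type*} {μ : ι → K}
    (hμ : ∀ i, μ i ≠ 0) {x : M} (hx : x ∈ ⨆ i, f.eigenspace (μ i)) :
    ∃ p : K[X], p.coeff 0 ≠ 0 ∧ aeval f p x = 0 := by
  classical
  obtain ⟨s, hs⟩ := Submodule.mem_iSup_iff_exists_finset.mp hx
  refine ⟨∏ i ∈ s, (X - C (μ i)), ?_, ?_⟩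
  · rw [coeff_zero_eq_eval_zero, eval_prod]
    exact Finset.prod_ne_zero_iff.mpr fun i _ => by simpa using hμ i
  · refine (iSup₂_le fun i hi y hy => ?_ : ⨆ i ∈ s, f.eigenspace (μ i) ≤ LinearMap.ker _) hs
    rw [LinearMap.mem_ker, aeval_apply_of_mem_apply_eq_smul (mem_eigenspace_iff.mp hy),
      eval_prod, Finset.prod_eq_zero hi (by simp), zero_smul]

theorem mem_of_apply_mem_of_mem_iSup_eigenspace {L : Submodule K M} (hL : L ≤ L.comap f)
    {ι : Type*} {μ : ι → K} (hμ : ∀ i, μ i ≠ 0) {x : M} (hx : x ∈ ⨆ i, f.eigenspace (μ i))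
    (hfx : f x ∈ L) : x ∈ L :=
  let ⟨_, hp, hpx⟩ := exists_aeval_eq_zero_of_mem_iSup_eigenspace hμ hx
  mem_of_apply_mem_of_aeval_eq_zero hL hp hpx hfx

end Module.End

section Leibniz

variable {R A B : Type*} [CommRing R] [Ring A] [Algebra R A] [Ring B] [Algebra R B]

theorem map_one_eq_zero_of_leibniz (φ : A →ₐ[R] B) {D : A →ₗ[R] B}
    (hD : ∀ x y, D (x * y) = D x * φ y + φ x * D y) : D 1 = 0 := by
  simpa using hD 1 1

theorem mul_mem_eigenspace_add {D : Module.End R A}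
    (hD : ∀ x y, D (x * y) = D x * y + x * D y) {a b : R} {x y : A}
    (hx : x ∈ D.eigenspace a) (hy : y ∈ D.eigenspace b) : x * y ∈ D.eigenspace (a + b) := by
  rw [Module.End.mem_eigenspace_iff] at *
  rw [hD, hx, hy, smul_mul_assoc, mul_smul_comm, add_smul]

theorem iSup_eigenspace_succ_mul_le {D : Module.End R A}
    (hD : ∀ x y, D (x * y) = D x * y + x * D y) :
    (⨆ n : ℕ, D.eigenspace (n + 1 : R)) * (⨆ n : ℕ, D.eigenspace (n + 1 : R)) ≤
      ⨆ n : ℕ, D.eigenspace (n + 1 : R) := by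
  rw [Submodule.iSup_mul]
  refine iSup_le fun m => ?_
  rw [Submodule.mul_iSup]
  refine iSup_le fun n => le_iSup_of_le (m + n + 1) (Submodule.mul_le.mpr fun x hx y hy => ?_)
  convert mul_mem_eigenspace_add hD hx hy using 2
  push_cast
  ring

theorem map_lie_of_leibniz {D : A →ₗ[R] A} (hD : ∀ x y, D (x * y) = D x * y + x * D y) (x y : A) :
    D ⁅x, y⁆ = ⁅D x, y⁆ + ⁅x, D y⁆ := by
  rw [Ring.lie_def, map_sub, hD, hD, Ring.lie_def, Ring.lie_def]
  abel

theorem rTensor_add_lTensor_mul {D : A →ₗ[R] A} (hD : ∀ x y, D (x * y) = D x * y + x * D y)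
    (u w : A ⊗[R] A) :
    (D.rTensor A + D.lTensor A) (u * w) =
      (D.rTensor A + D.lTensor A) u * w + u * (D.rTensor A + D.lTensor A) w := by
  induction u using TensorProduct.induction_on with
  | zero => simp
  | add u₁ u₂ h₁ h₂ => simp only [add_mul, map_add, h₁, h₂]; abel
  | tmul a b =>
    induction w using TensorProduct.induction_on with
    | zero => simp
    | add w₁ w₂ h₁ h₂ => simp only [mul_add, map_add, h₁, h₂]; abel
    | tmul c d =>
      simp only [Algebra.TensorProduct.tmul_mul_tmul, LinearMap.add_apply,
        LinearMap.rTensor_tmul, LinearMap.lTensor_tmul, hD, add_mul, mul_add, add_tmul, tmul_add]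
      abel

end Leibniz

section LieSpan

variable {R A : Type*} [CommRing R] [Ring A] [Algebra R A] {s : Set A}

theorem map_mem_lieSpan_of_leibniz {D : A →ₗ[R] A} (hD : ∀ x y, D (x * y) = D x * y + x * D y)
    (hs : ∀ a ∈ s, D a ∈ LieSubalgebra.lieSpan R A s) {x : A}
    (hx : x ∈ LieSubalgebra.lieSpan R A s) : D x ∈ LieSubalgebra.lieSpan R A s := by
  induction hx using LieSubalgebra.lieSpan_induction with
  | mem a ha => exact hs a ha
  | zero => simp
  | add x y _ _ hx hy => simpa using add_mem hx hy
  | smul r x _ hx => simpa using SMulMemClass.smul_mem r hx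
  | lie x y hx' hy' hx hy =>
    rw [map_lie_of_leibniz hD]
    exact add_mem (LieSubalgebra.lie_mem _ hx hy') (LieSubalgebra.lie_mem _ hx' hy)

theorem apply_coe_eq_of_leibniz {D : A →ₗ[R] A} (hD : ∀ x y, D (x * y) = D x * y + x * D y)
    {m : LieSubalgebra.lieSpan R A s →ₗ[R] LieSubalgebra.lieSpan R A s}
    (hm : ∀ x y, m ⁅x, y⁆ = ⁅m x, y⁆ + ⁅x, m y⁆)
    (hs : ∀ a (ha : a ∈ s), D a = m ⟨a, LieSubalgebra.subset_lieSpan ha⟩)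
    (x : LieSubalgebra.lieSpan R A s) : D x = m x := by
  obtain ⟨x, hx⟩ := x
  induction hx using LieSubalgebra.lieSpan_induction with
  | mem a ha => exact hs a ha
  | zero =>
    rw [map_zero]
    exact congrArg Subtype.val (map_zero m).symm
  | add x y hx' hy' hx hy =>
    rw [map_add, hx, hy]
    exact congrArg Subtype.val (map_add m ⟨x, hx'⟩ ⟨y, hy'⟩).symm
  | smul r x hx' hx =>
    rw [map_smul, hx]
    exact congrArg Subtype.val (map_smul m r ⟨x, hx'⟩).symm
  | lie x y hx' hy' hx hy =>
    rw [map_lie_of_leibniz hD, hx, hy]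
    exact congrArg Subtype.val (hm ⟨x, hx'⟩ ⟨y, hy'⟩).symm

end LieSpan

namespace TensorAlgebra

variable {R M N : Type*} [CommRing R] [AddCommGroup M] [Module R M] [AddCommGroup N] [Module R N]

theorem ext_of_leibniz {B : Type*} [Ring B] [Algebra R B] (φ : TensorAlgebra R M →ₐ[R] B)
    {D₁ D₂ : TensorAlgebra R M →ₗ[R] B}
    (h₁ : ∀ x y, D₁ (x * y) = D₁ x * φ y + φ x * D₁ y)
    (h₂ : ∀ x y, D₂ (x * y) = D₂ x * φ y + φ x * D₂ y) (h : ∀ m, D₁ (ι R m) = D₂ (ι R m)) :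
    D₁ = D₂ := by
  ext x
  induction x using TensorAlgebra.induction with
  | algebraMap r =>
    rw [Algebra.algebraMap_eq_smul_one, map_smul, map_smul, map_one_eq_zero_of_leibniz φ h₁,
      map_one_eq_zero_of_leibniz φ h₂]
  | ι m => exact h m
  | mul x y hx hy => rw [h₁, h₂, hx, hy]
  | add x y hx hy => rw [map_add, map_add, hx, hy]

theorem eq_of_apply_ι_mul {D F : Module.End R (TensorAlgebra R M)}
    (hD : ∀ x y, D (x * y) = D x * y + x * D y)
    (hF : ∀ m y, F (ι R m * y) = ι R m * F y + D (ι R m) * y) (hF₁ : F 1 = 0) : F = D := by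
  suffices h : ∀ x y, F (x * y) = x * F y + D x * y by
    ext x
    simpa [hF₁] using h x 1
  intro x
  induction x using TensorAlgebra.induction with
  | algebraMap r =>
    intro y
    rw [Algebra.algebraMap_eq_smul_one, map_smul, map_one_eq_zero_of_leibniz (AlgHom.id R _) hD]
    simp
  | ι m => exact hF m
  | mul x₁ x₂ h₁ h₂ =>
    intro y
    rw [mul_assoc, h₁, h₂, hD]
    noncomm_ring
  | add x₁ x₂ h₁ h₂ =>
    intro y
    rw [add_mul, map_add, h₁, h₂, map_add]
    noncomm_ring

def liftSqZero (f : M →ₗ[R] TensorAlgebra R M) :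
    TensorAlgebra R M →ₐ[R] TrivSqZeroExt (TensorAlgebra R M) (TensorAlgebra R M) :=
  lift R ((TrivSqZeroExt.inlAlgHom R _ _).toLinearMap ∘ₗ ι R +
    (TrivSqZeroExt.inrHom _ _).restrictScalars R ∘ₗ f)

def liftDerivation (f : M →ₗ[R] TensorAlgebra R M) : Module.End R (TensorAlgebra R M) :=
  (TrivSqZeroExt.sndHom _ _).restrictScalars R ∘ₗ (liftSqZero f).toLinearMap

section

variable (f : M →ₗ[R] TensorAlgebra R M)

theorem fst_liftSqZero (x : TensorAlgebra R M) : (liftSqZero f x).fst = x := by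
  have : (TrivSqZeroExt.fstHom R _ _).comp (liftSqZero f) = AlgHom.id R _ := by
    ext m
    simp [liftSqZero]
  exact AlgHom.congr_fun this x

@[simp]
theorem liftDerivation_ι (m : M) : liftDerivation f (ι R m) = f m := by
  simp [liftDerivation, liftSqZero]

theorem liftDerivation_mul (x y : TensorAlgebra R M) :
    liftDerivation f (x * y) = liftDerivation f x * y + x * liftDerivation f y := by
  simp only [liftDerivation, LinearMap.comp_apply, AlgHom.toLinearMap_apply, map_mul,
    LinearMap.restrictScalars_apply, TrivSqZeroExt.sndHom_apply, TrivSqZeroExt.snd_mul,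
    fst_liftSqZero, smul_eq_mul, MulOpposite.smul_eq_mul_unop, MulOpposite.unop_op]
  exact add_comm _ _

end

def numberOperator : Module.End R (TensorAlgebra R M) := liftDerivation (ι R)

theorem sub_algebraMap_mem_iSup_eigenspace_numberOperator (x : TensorAlgebra R M) :
    x - algebraMap R _ (algebraMapInv x) ∈
      ⨆ n : ℕ, (numberOperator : Module.End R (TensorAlgebra R M)).eigenspace (n + 1 : R) := by
  set I := ⨆ n : ℕ, (numberOperator : Module.End R (TensorAlgebra R M)).eigenspace (n + 1 : R)
  induction x using TensorAlgebra.induction with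
  | algebraMap r => simp
  | ι m =>
    refine Submodule.mem_iSup_of_mem 0 (Module.End.mem_eigenspace_iff.mpr ?_)
    simp [numberOperator, algebraMapInv]
  | add x y hx hy =>
    rw [map_add, map_add, add_sub_add_comm]
    exact I.add_mem hx hy
  | mul x y hx hy =>
    have key : x * y - algebraMap R _ (algebraMapInv (x * y)) =
        (x - algebraMap R _ (algebraMapInv x)) * (y - algebraMap R _ (algebraMapInv y)) +
          algebraMapInv y • (x - algebraMap R _ (algebraMapInv x)) +
          algebraMapInv x • (y - algebraMap R _ (algebraMapInv y)) := by
      simp only [map_mul, Algebra.algebraMap_eq_smul_one, sub_mul, mul_sub, smul_mul_assoc,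
        mul_smul_comm, one_mul, mul_one, smul_sub, smul_smul, mul_comm (algebraMapInv y)]
      abel
    rw [key]
    refine I.add_mem (I.add_mem ?_ (I.smul_mem _ hx)) (I.smul_mem _ hy)
    exact iSup_eigenspace_succ_mul_le (liftDerivation_mul _) (Submodule.mul_mem_mul hx hy)

/- The lift of `augmentedRep g f` acts on `R × N` by the triangular matrix
`((ε x, 0), (D x, lift g x))`; multiplicativity of the lift is the twisted Leibniz rule
`D (x * y) = lift g x (D y) + ε y • D x` for its corner entry `D`. -/
def augmentedRep (g : M →ₗ[R] Module.End R N) (f : M →ₗ[R] N) :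
    M →ₗ[R] Module.End R (R × N) where
  toFun m := LinearMap.inr R R N ∘ₗ
    (g m ∘ₗ LinearMap.snd R R N + LinearMap.toSpanSingleton R N (f m) ∘ₗ LinearMap.fst R R N)
  map_add' m m' := by ext <;> simp
  map_smul' r m := by ext <;> simp

def liftAugmentedDerivation (g : M →ₗ[R] Module.End R N) (f : M →ₗ[R] N) :
    TensorAlgebra R M →ₗ[R] N :=
  LinearMap.snd R R N ∘ₗ LinearMap.applyₗ ((1 : R), (0 : N)) ∘ₗ
    (lift R (augmentedRep g f)).toLinearMap

section

variable (g : M →ₗ[R] Module.End R N) (f : M →ₗ[R] N)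

theorem lift_augmentedRep_apply (x : TensorAlgebra R M) (c : R) (n : N) :
    lift R (augmentedRep g f) x (c, n) =
      (algebraMapInv x * c, lift R g x n + c • liftAugmentedDerivation g f x) := by
  induction x using TensorAlgebra.induction generalizing c n with
  | algebraMap r => simp [liftAugmentedDerivation, Algebra.algebraMap_eq_smul_one]
  | ι m => simp [liftAugmentedDerivation, augmentedRep, algebraMapInv]
  | add x y hx hy =>
    simp only [map_add, LinearMap.add_apply, hx, hy, Prod.mk_add_mk, add_mul, smul_add]
    abel_nf
  | mul x y hx hy =>
    have hD : liftAugmentedDerivation g f (x * y) =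
        lift R g x (liftAugmentedDerivation g f y) +
          algebraMapInv y • liftAugmentedDerivation g f x := by
      change (lift R (augmentedRep g f) (x * y) (1, 0)).2 = _
      rw [map_mul, Module.End.mul_apply, hy, hx]
      simp
    rw [map_mul, Module.End.mul_apply, hy, hx, hD]
    simp [Module.End.mul_apply, smul_add, smul_smul, mul_comm, mul_left_comm, add_assoc]

@[simp]
theorem liftAugmentedDerivation_ι (m : M) : liftAugmentedDerivation g f (ι R m) = f m := by
  simp [liftAugmentedDerivation, augmentedRep]

theorem liftAugmentedDerivation_one : liftAugmentedDerivation g f 1 = 0 := by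
  simp [liftAugmentedDerivation]

theorem liftAugmentedDerivation_mul (x y : TensorAlgebra R M) :
    liftAugmentedDerivation g f (x * y) =
      lift R g x (liftAugmentedDerivation g f y) +
        algebraMapInv y • liftAugmentedDerivation g f x := by
  change (lift R (augmentedRep g f) (x * y) (1, 0)).2 = _
  rw [map_mul, Module.End.mul_apply, lift_augmentedRep_apply, lift_augmentedRep_apply]
  simp

end

theorem lift_apply_mem {g : M →ₗ[R] Module.End R N}
    {L : Submodule R N} (hg : ∀ m, ∀ n ∈ L, g m n ∈ L) (x : TensorAlgebra R M) {n : N}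
    (hn : n ∈ L) : lift R g x n ∈ L := by
  induction x using TensorAlgebra.induction generalizing n with
  | algebraMap r => simpa [Module.algebraMap_end_apply] using L.smul_mem r hn
  | ι m => simpa using hg m _ hn
  | add x y hx hy => simpa using L.add_mem (hx hn) (hy hn)
  | mul x y hx hy => simpa using hx (hy hn)

/-- The Dynkin map `m₁ ⋯ mₖ ↦ [m₁, [m₂, …, [m_{k-1}, mₖ]…]]`. -/
def dynkin : Module.End R (TensorAlgebra R M) :=
  liftAugmentedDerivation ((LieAlgebra.ad R (TensorAlgebra R M)).toLinearMap ∘ₗ ι R) (ι R)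

theorem dynkin_ι_mul (m : M) (y : TensorAlgebra R M) :
    dynkin (ι R m * y) = ⁅ι R m, dynkin y⁆ + algebraMapInv y • ι R m := by
  simp [dynkin, liftAugmentedDerivation_mul]

theorem dynkin_mem_lieSpan (x : TensorAlgebra R M) :
    dynkin x ∈ LieSubalgebra.lieSpan R (TensorAlgebra R M) (Set.range (ι R)) := by
  set L := LieSubalgebra.lieSpan R (TensorAlgebra R M) (Set.range (ι R))
  have hL : ∀ m, ∀ n ∈ L.toSubmodule, LieAlgebra.ad R _ (ι R m) n ∈ L.toSubmodule :=
    fun m _ hn => L.lie_mem (LieSubalgebra.subset_lieSpan (Set.mem_range_self m)) hn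
  induction x using TensorAlgebra.induction with
  | algebraMap r =>
    simp [Algebra.algebraMap_eq_smul_one, dynkin, liftAugmentedDerivation_one]
  | ι m => simpa [dynkin] using LieSubalgebra.subset_lieSpan (Set.mem_range_self m)
  | add x y hx hy => simpa using add_mem hx hy
  | mul x y hx hy =>
    rw [dynkin, liftAugmentedDerivation_mul]
    exact add_mem (lift_apply_mem hL x hy) (SMulMemClass.smul_mem _ hx)

end TensorAlgebra

def primitives : Submodule ℚ (TA V) :=
  LinearMap.eqLocus (Δ V).toLinearMap (rUnit V + lUnit V)

section Hopf

variable {V}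
omit [FiniteDimensional ℚ V]

theorem Δ_ι (v : V) : Δ V (ι ℚ v) = ι ℚ v ⊗ₜ[ℚ] 1 + 1 ⊗ₜ[ℚ] ι ℚ v := by
  simp [Δ, rUnit, lUnit]

def counitLeft : TA V ⊗[ℚ] TA V →ₐ[ℚ] TA V :=
  (Algebra.TensorProduct.lid ℚ (TA V)).toAlgHom.comp
    (Algebra.TensorProduct.map algebraMapInv (AlgHom.id ℚ (TA V)))

@[simp]
theorem counitLeft_tmul (a b : TA V) : counitLeft (a ⊗ₜ[ℚ] b) = algebraMapInv a • b := by
  simp [counitLeft]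

theorem counitLeft_Δ (x : TA V) : counitLeft (Δ V x) = x := by
  have : counitLeft.comp (Δ V) = AlgHom.id ℚ (TA V) := by
    ext v
    simp [Δ_ι, algebraMapInv]
  exact AlgHom.congr_fun this x

theorem mem_primitives {x : TA V} : x ∈ primitives V ↔ Δ V x = x ⊗ₜ[ℚ] 1 + 1 ⊗ₜ[ℚ] x := by
  simp [primitives, rUnit, lUnit]

theorem ι_mem_primitives (v : V) : ι ℚ v ∈ primitives V :=
  mem_primitives.mpr (Δ_ι v)

theorem lie_mem_primitives {x y : TA V} (hx : x ∈ primitives V) (hy : y ∈ primitives V) :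
    ⁅x, y⁆ ∈ primitives V := by
  rw [mem_primitives] at *
  rw [Ring.lie_def, map_sub, map_mul, map_mul, hx, hy]
  simp only [add_mul, mul_add, Algebra.TensorProduct.tmul_mul_tmul, one_mul, mul_one, sub_tmul,
    tmul_sub]
  abel

theorem freeLie_le_primitives : (freeLie V).toSubmodule ≤ primitives V := fun _ hx => by
  induction hx using LieSubalgebra.lieSpan_induction with
  | mem _ hv => obtain ⟨v, rfl⟩ := hv; exact ι_mem_primitives v
  | zero => exact zero_mem _
  | add _ _ _ _ hx hy => exact add_mem hx hy
  | smul r _ _ hx => exact SMulMemClass.smul_mem r hx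
  | lie _ _ _ _ hx hy => exact lie_mem_primitives hx hy

theorem algebraMapInv_eq_zero_of_mem_primitives {x : TA V} (hx : x ∈ primitives V) :
    algebraMapInv x = 0 := by
  have h := counitLeft_Δ x
  rw [mem_primitives.mp hx, map_add, counitLeft_tmul, counitLeft_tmul, map_one, one_smul,
    add_eq_right] at h
  simpa using congrArg algebraMapInv h

theorem coderivation_of_leibniz {δ : Module.End ℚ (TA V)}
    (hδ : ∀ x y, δ (x * y) = δ x * y + x * δ y) (hgen : ∀ v, δ (ι ℚ v) ∈ primitives V) :
    (Δ V).toLinearMap ∘ₗ δ =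
      (TensorProduct.map δ LinearMap.id + TensorProduct.map LinearMap.id δ) ∘ₗ
        (Δ V).toLinearMap := by
  have hδ₁ : δ 1 = 0 := map_one_eq_zero_of_leibniz (AlgHom.id ℚ _) hδ
  refine ext_of_leibniz (Δ V) (fun x y => by simp [hδ]) (fun x y => ?_) fun v => ?_
  · simp only [LinearMap.comp_apply, AlgHom.toLinearMap_apply, map_mul]
    exact rTensor_add_lTensor_mul hδ _ _
  · simp [mem_primitives.mp (hgen v), Δ_ι, hδ₁]

theorem map_mem_primitives_of_coderivation {δ : Module.End ℚ (TA V)} (hδ₁ : δ 1 = 0)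
    (hcoder : (Δ V).toLinearMap ∘ₗ δ =
      (TensorProduct.map δ LinearMap.id + TensorProduct.map LinearMap.id δ) ∘ₗ
        (Δ V).toLinearMap) {x : TA V} (hx : x ∈ primitives V) : δ x ∈ primitives V := by
  rw [mem_primitives] at hx ⊢
  simpa [hx, hδ₁] using LinearMap.congr_fun hcoder x

theorem numberOperator_mem_freeLie {x : TA V} (hx : x ∈ freeLie V) :
    numberOperator x ∈ freeLie V := by
  refine map_mem_lieSpan_of_leibniz (liftDerivation_mul _) (fun _ hv => ?_) hx
  obtain ⟨v, rfl⟩ := hv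
  simpa [numberOperator] using LieSubalgebra.subset_lieSpan (Set.mem_range_self v)

theorem mul'_map_dynkin_ι_mul (v : V) (t : TA V ⊗[ℚ] TA V) :
    LinearMap.mul' ℚ (TA V) (map dynkin LinearMap.id ((ι ℚ v ⊗ₜ[ℚ] 1 + 1 ⊗ₜ[ℚ] ι ℚ v) * t)) =
      ι ℚ v * LinearMap.mul' ℚ (TA V) (map dynkin LinearMap.id t) + ι ℚ v * counitLeft t := by
  induction t using TensorProduct.induction_on with
  | zero => simp
  | add t₁ t₂ h₁ h₂ => simp only [mul_add, map_add, h₁, h₂]; abel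
  | tmul a b =>
    simp only [add_mul, Algebra.TensorProduct.tmul_mul_tmul, one_mul, map_add, map_tmul,
      LinearMap.mul'_apply, LinearMap.id_apply, dynkin_ι_mul, counitLeft_tmul, Ring.lie_def]
    simp only [sub_mul, smul_mul_assoc, mul_smul_comm, mul_assoc]
    abel

theorem mul'_map_dynkin_comp_Δ :
    LinearMap.mul' ℚ (TA V) ∘ₗ map dynkin LinearMap.id ∘ₗ (Δ V).toLinearMap = numberOperator := by
  refine eq_of_apply_ι_mul (liftDerivation_mul _) (fun v y => ?_) ?_
  · simp only [LinearMap.comp_apply, AlgHom.toLinearMap_apply, map_mul, Δ_ι,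
      mul'_map_dynkin_ι_mul, counitLeft_Δ, numberOperator, liftDerivation_ι]
  · simp [Algebra.TensorProduct.one_def, dynkin, liftAugmentedDerivation_one]

theorem dynkin_eq_numberOperator_of_mem_primitives {x : TA V} (hx : x ∈ primitives V) :
    dynkin x = numberOperator x := by
  rw [← mul'_map_dynkin_comp_Δ]
  simp [mem_primitives.mp hx, dynkin, liftAugmentedDerivation_one]

theorem primitives_le_freeLie : primitives V ≤ (freeLie V).toSubmodule := fun x hx => by
  have hx' := sub_algebraMap_mem_iSup_eigenspace_numberOperator x
  rw [algebraMapInv_eq_zero_of_mem_primitives hx, map_zero, sub_zero] at hx'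
  refine Module.End.mem_of_apply_mem_of_mem_iSup_eigenspace (fun _ => numberOperator_mem_freeLie)
    (fun n => Nat.cast_add_one_ne_zero n) hx' ?_
  rw [← dynkin_eq_numberOperator_of_mem_primitives hx]
  exact dynkin_mem_lieSpan x

end Hopf

theorem lie_derivation_extends_uniquely_to_hopf_derivation :
    -- extension: unique Hopf-algebra derivation of T(V) extending m
    (∀ m : freeLie V →ₗ[ℚ] freeLie V,
      (∀ x y : freeLie V, m ⁅x, y⁆ = ⁅m x, y⁆ + ⁅x, m y⁆) →
      ∃! δ : TA V →ₗ[ℚ] TA V,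
        (∀ x y : TA V, δ (x * y) = δ x * y + x * δ y) ∧
        ((Δ V).toLinearMap ∘ₗ δ
          = (TensorProduct.map δ LinearMap.id
              + TensorProduct.map LinearMap.id δ) ∘ₗ (Δ V).toLinearMap) ∧
        (∀ x : freeLie V, δ (x : TA V) = ((m x : freeLie V) : TA V))) ∧
    -- converse: any Hopf algebra derivation preserves L(V)
    (∀ δ : TA V →ₗ[ℚ] TA V,
      (∀ x y : TA V, δ (x * y) = δ x * y + x * δ y) →
      ((Δ V).toLinearMap ∘ₗ δ
          = (TensorProduct.map δ LinearMap.id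
              + TensorProduct.map LinearMap.id δ) ∘ₗ (Δ V).toLinearMap) →
      ∀ x : TA V, x ∈ freeLie V → δ x ∈ freeLie V) := by
  refine ⟨fun m hm => ?_, fun δ hδ hcoder x hx => ?_⟩
  · have hι : ∀ v, ι ℚ v ∈ freeLie V := fun v => LieSubalgebra.subset_lieSpan (Set.mem_range_self v)
    let f : V →ₗ[ℚ] TA V :=
      (freeLie V).toSubmodule.subtype ∘ₗ m ∘ₗ (ι ℚ).codRestrict (freeLie V).toSubmodule hι
    have hf : ∀ x : freeLie V, liftDerivation f x = m x := by
      refine apply_coe_eq_of_leibniz (liftDerivation_mul f) hm fun _ hv => ?_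
      obtain ⟨v, rfl⟩ := hv
      exact liftDerivation_ι f v
    refine ⟨liftDerivation f, ⟨liftDerivation_mul f, coderivation_of_leibniz (liftDerivation_mul f)
      fun v => freeLie_le_primitives ?_, hf⟩, fun δ ⟨hδ, _, hδm⟩ => ?_⟩
    · rw [liftDerivation_ι]
      exact (m ⟨ι ℚ v, hι v⟩).2
    · refine ext_of_leibniz (AlgHom.id ℚ _) hδ (liftDerivation_mul f) fun v => ?_
      exact (hδm ⟨ι ℚ v, hι v⟩).trans (hf ⟨ι ℚ v, hι v⟩).symm
  · refine map_mem_lieSpan_of_leibniz hδ (fun _ hv => ?_) hx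
    obtain ⟨v, rfl⟩ := hv
    exact primitives_le_freeLie (map_mem_primitives_of_coderivation
      (map_one_eq_zero_of_leibniz (AlgHom.id ℚ _) hδ) hcoder (ι_mem_primitives v))

end
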